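/- arXiv:2310.20683 — 7 statements merged into one kernel-verified Lean document; each statement's English description precedes it below -/
import Mathlib

section
/- Let f : G → H be a quasi-homomorphism with compact error set C into a topological group H. If the closure of f[X] is compact for a subset X ⊆ G, then for every i ≥ 1 the closure of f[X^i] is compact; indeed cl(f[X^i]) ⊆ cl(f[X])^i · C^(i-1). -/
/-!
Writing `f (x * y) = f x * f y * c` with `c ∈ C`, induction on `i` gives
`f '' (X ^ (i + 1)) ⊆ (f '' X) ^ (i + 1) * C ^ i`. Passing to closures only needs the
right-hand side with `f '' X` replaced by its closure `A` to be closed. As `H` need not be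
Hausdorff, compactness does not give this, but the set equals `A * (A ^ i * C ^ i)`, a closed
set times a compact one. Being a closed subset of a compact set,
`closure (f '' (X ^ (i + 1)))` is then compact.
-/

open Pointwise

theorem IsCompact.pow {M : Type*} [Monoid M] [TopologicalSpace M] [ContinuousMul M] {s : Set M}
    (hs : IsCompact s) : ∀ n : ℕ, IsCompact (s ^ n)
  | 0 => by simp
  | n + 1 => by rw [pow_succ]; exact (hs.pow n).mul hs

theorem image_pow_succ_subset_of_quasiHom {G H : Type*} [Group G] [Group H] {C : Set H}
    {f : G → H} (hf : ∀ x y : G, (f y)⁻¹ * (f x)⁻¹ * f (x * y) ∈ C) (X : Set G) :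
    ∀ n : ℕ, f '' (X ^ (n + 1)) ⊆ (f '' X) ^ (n + 1) * C ^ n
  | 0 => by simp
  | n + 1 => by
    rintro _ ⟨_, hxy, rfl⟩
    rw [pow_succ'] at hxy
    obtain ⟨x, hx, y, hy, rfl⟩ := hxy
    obtain ⟨a, ha, c, hc, hfy⟩ :=
      image_pow_succ_subset_of_quasiHom hf X n (Set.mem_image_of_mem f hy)
    have hfxy : f (x * y) = (f x * a) * (c * ((f y)⁻¹ * (f x)⁻¹ * f (x * y))) := by
      rw [← hfy]; group
    rw [hfxy, pow_succ' _ (n + 1), pow_succ C n]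
    exact Set.mul_mem_mul (Set.mul_mem_mul (Set.mem_image_of_mem f hx) ha)
      (Set.mul_mem_mul hc (hf x y))

theorem IsClosed.pow_succ_mul_of_isCompact {G : Type*} [Group G] [TopologicalSpace G]
    [IsTopologicalGroup G] {A K : Set G} {n : ℕ} (hA : IsClosed A) (hAc : IsCompact A)
    (hK : IsCompact K) : IsClosed (A ^ (n + 1) * K) := by
  rw [pow_succ', mul_assoc]
  exact hA.mul_right_of_isCompact ((hAc.pow n).mul hK)

theorem stmt2 {G H : Type*} [Group G] [Group H] [TopologicalSpace H] [IsTopologicalGroup H]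
    (C : Set H) (hC : IsCompact C) (X : Set G) (f : G → H)
    (hf : ∀ x y : G, (f y)⁻¹ * (f x)⁻¹ * f (x * y) ∈ C)
    (hX : IsCompact (closure (f '' X))) :
    ∀ i : ℕ, 1 ≤ i → closure (f '' (X ^ i)) ⊆ closure (f '' X) ^ i * C ^ (i - 1) ∧
      IsCompact (closure (f '' (X ^ i))) := by
  intro i hi
  obtain ⟨n, rfl⟩ := Nat.exists_eq_add_of_le' hi
  rw [Nat.add_sub_cancel]
  have hclosed : IsClosed (closure (f '' X) ^ (n + 1) * C ^ n) :=
    isClosed_closure.pow_succ_mul_of_isCompact hX (hC.pow n)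
  have hsub : closure (f '' (X ^ (n + 1))) ⊆ closure (f '' X) ^ (n + 1) * C ^ n :=
    hclosed.closure_subset_iff.mpr <| (image_pow_succ_subset_of_quasiHom hf X n).trans <|
      Set.mul_subset_mul_right (Set.pow_subset_pow_left subset_closure)
  exact ⟨hsub, ((hX.pow _).mul (hC.pow n)).of_isClosed_subset isClosed_closure hsub⟩
end

section
/- Let f : G → H : C be a quasi-homomorphism into a locally compact group H with compact normal symmetric error set C, such that cl(f[X]) is compact, where X ⊆ G is symmetric with e ∈ X. Then for every neighborhood U of the identity in H, finitely many left translates of f⁻¹[UC] cover X. -/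
/-! Because `f[X]` has compact closure, finitely many translates `f y • U` with `y ∈ X` cover
`f[X]`. The right error condition gives `f (y⁻¹ * x) ∈ ((f y)⁻¹ * f x) • C`, so
`f x ∈ f y • U` puts `x` in `y • f⁻¹[U * C]`. -/

open Pointwise Topology

theorem exists_finite_subset_subset_mul_of_isCompact_closure {H : Type*} [Group H]
    [TopologicalSpace H] [IsTopologicalGroup H] {S V : Set H} (hS : IsCompact (closure S))
    (hV : V ∈ 𝓝 1) : ∃ T ⊆ S, T.Finite ∧ S ⊆ T * V := by
  set W := interior V ∩ (interior V)⁻¹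
  have hWo : IsOpen W := isOpen_interior.inter isOpen_interior.inv
  have hW1 : W ∈ 𝓝 1 := hWo.mem_nhds ⟨mem_interior_iff_mem_nhds.2 hV, by
    simpa using mem_interior_iff_mem_nhds.2 hV⟩
  have hWinv : ∀ w ∈ W, w⁻¹ ∈ W := fun w hw => ⟨by simpa using hw.2, by simpa using hw.1⟩
  have hcover : closure S ⊆ ⋃ a ∈ S, (a * ·) '' W := by
    rw [Set.iUnion_mul_left_image]
    exact closure_subset_mul_right_of_mem_nhds_one_of_inv S hW1 hWinv
  obtain ⟨T, hTS, hTfin, hST⟩ := hS.elim_finite_subcover_image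
    (fun a _ => isOpenMap_mul_left a W hWo) hcover
  refine ⟨T, hTS, hTfin, subset_closure.trans (hST.trans ?_)⟩
  rw [Set.iUnion_mul_left_image]
  exact Set.mul_subset_mul_left (interior_subset.trans' Set.inter_subset_left)

theorem apply_mem_smul_of_right_error_mem {G H : Type*} [Group G] [Group H] {C : Set H}
    (hCs : C⁻¹ = C) {f : G → H} (hfr : ∀ x y : G, (f y)⁻¹ * (f x)⁻¹ * f (x * y) ∈ C)
    (a b : G) : f b ∈ ((f a)⁻¹ * f (a * b)) • C :=
  ⟨((f b)⁻¹ * (f a)⁻¹ * f (a * b))⁻¹, hCs ▸ Set.inv_mem_inv.2 (hfr a b), by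
    simp only [smul_eq_mul]; group⟩

theorem stmt3_general {G H : Type*} [Group G] [Group H] [TopologicalSpace H] [IsTopologicalGroup H]
    (C : Set H) (hCs : C⁻¹ = C)
    (X : Set G)
    (f : G → H)
    (hfr : ∀ x y : G, (f y)⁻¹ * (f x)⁻¹ * f (x * y) ∈ C)
    (hfX : IsCompact (closure (f '' X))) :
    ∀ U ∈ nhds (1 : H), ∃ F : Finset G, X ⊆ ↑F * f ⁻¹' (U * C) := by
  intro U hU
  obtain ⟨T, -, hTfin, hXT⟩ := Set.exists_subset_image_finite_and.1
    (exists_finite_subset_subset_mul_of_isCompact_closure hfX hU)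
  refine ⟨hTfin.toFinset, fun x hx => ?_⟩
  obtain ⟨_, ⟨y, hyT, rfl⟩, u, hu, hyux⟩ := hXT ⟨x, hx, rfl⟩
  have hu_eq : (f y)⁻¹ * f (y * (y⁻¹ * x)) = u := by
    rw [mul_inv_cancel_left, ← hyux, inv_mul_cancel_left]
  refine ⟨y, hTfin.mem_toFinset.2 hyT, y⁻¹ * x, ?_, mul_inv_cancel_left y x⟩
  exact Set.smul_set_subset_mul (hu_eq ▸ hu) (apply_mem_smul_of_right_error_mem hCs hfr y _)

theorem stmt3 {G H : Type*} [Group G] [Group H] [TopologicalSpace H] [IsTopologicalGroup H]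
    [LocallyCompactSpace H] [T2Space H]
    (C : Set H) (hCc : IsCompact C) (hCs : C⁻¹ = C)
    (hCn : ∀ c ∈ C, ∀ h : H, h * c * h⁻¹ ∈ C)
    (X : Set G) (hXs : X⁻¹ = X) (hX1 : (1 : G) ∈ X)
    (hgen : Subgroup.closure X = ⊤)
    (f : G → H)
    (hfr : ∀ x y : G, (f y)⁻¹ * (f x)⁻¹ * f (x * y) ∈ C)
    (hfl : ∀ x y : G, f (x * y) * (f y)⁻¹ * (f x)⁻¹ ∈ C)
    (hfX : IsCompact (closure (f '' X))) :
    ∀ U ∈ nhds (1 : H), ∃ F : Finset G, X ⊆ ↑F * f ⁻¹' (U * C) :=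
  stmt3_general C hCs X f hfr hfX
end

section
/- Let S be a semigroup with a quasi-compact T1 topology such that for every s₀ ∈ S the map s ↦ s·s₀ is continuous and closed. Then S contains an idempotent. -/
theorem stmt5 {S : Type*} [Semigroup S] [TopologicalSpace S] [CompactSpace S] [T1Space S]
    [Nonempty S]
    (hc : ∀ s₀ : S, Continuous (fun s => s * s₀))
    (hcl : ∀ s₀ : S, IsClosedMap (fun s => s * s₀)) :
    ∃ u : S, u * u = u := by
  let 𝒮 : Set (Set S) :=
    { N | IsClosed N ∧ N.Nonempty ∧ ∀ (m) (_ : m ∈ N) (m') (_ : m' ∈ N), m * m' ∈ N }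
  rsuffices ⟨N, hN⟩ : ∃ N', Minimal (· ∈ 𝒮) N'
  · obtain ⟨N_closed, ⟨m, hm⟩, N_mul⟩ := hN.prop
    use m
    have scaling_eq_self : (· * m) '' N = N := by
      apply hN.eq_of_subset
      · refine ⟨hcl m N N_closed, ⟨_, ⟨m, hm, rfl⟩⟩, ?_⟩
        rintro _ ⟨m'', hm'', rfl⟩ _ ⟨m', hm', rfl⟩
        exact ⟨m'' * m * m', N_mul _ (N_mul _ hm'' _ hm) _ hm', mul_assoc _ _ _⟩
      · rintro _ ⟨m', hm', rfl⟩
        exact N_mul _ hm' _ hm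
    have absorbing_eq_self : N ∩ { m' | m' * m = m } = N := by
      apply hN.eq_of_subset
      · refine ⟨N_closed.inter ((T1Space.t1 m).preimage (hc m)), ?_, ?_⟩
        · rwa [← scaling_eq_self] at hm
        · rintro m'' ⟨mem'', eq'' : _ = m⟩ m' ⟨mem', eq' : _ = m⟩
          refine ⟨N_mul _ mem'' _ mem', ?_⟩
          rw [Set.mem_setOf_eq, mul_assoc, eq', eq'']
      apply Set.inter_subset_left
    rw [← absorbing_eq_self] at hm
    exact hm.2
  refine zorn_superset _ fun c hcs hc' => ?_
  refine
    ⟨⋂₀ c, ⟨isClosed_sInter fun t ht => (hcs ht).1, ?_, fun m hm m' hm' => ?_⟩, fun s hs =>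
      Set.sInter_subset_of_mem hs⟩
  · obtain rfl | hcnemp := c.eq_empty_or_nonempty
    · rw [Set.sInter_empty]
      apply Set.univ_nonempty
    convert
      @IsCompact.nonempty_iInter_of_directed_nonempty_isCompact_isClosed _ _ _ hcnemp.coe_sort
        ((↑) : c → Set S) ?_ ?_ ?_ ?_
    · exact Set.sInter_eq_iInter
    · exact DirectedOn.directed_val (IsChain.directedOn hc'.symm)
    exacts [fun i => (hcs i.prop).2.1, fun i => (hcs i.prop).1.isCompact, fun i => (hcs i.prop).1]
  · rw [Set.mem_sInter]
    exact fun t ht => (hcs ht).2.2 m (Set.mem_sInter.mp hm t ht) m' (Set.mem_sInter.mp hm' t ht)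
end

section
/- Let S be a semigroup with a quasi-compact T1 topology such that right multiplication by each fixed element is continuous and closed. Then S has a minimal left ideal M, and for each idempotent u in M the set uM is a group under the semigroup operation with identity u. -/
theorem stmt6 {S : Type*} [Semigroup S] [TopologicalSpace S] [CompactSpace S] [T1Space S]
    [Nonempty S]
    (hc : ∀ s₀ : S, Continuous (fun s => s * s₀))
    (hcl : ∀ s₀ : S, IsClosedMap (fun s => s * s₀)) :
    ∃ M : Set S, M.Nonempty ∧ (∀ s : S, ∀ m ∈ M, s * m ∈ M) ∧
      (∀ M' : Set S, M'.Nonempty → M' ⊆ M → (∀ s : S, ∀ m ∈ M', s * m ∈ M') → M' = M) ∧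
      ∀ u ∈ M, u * u = u →
        ((∀ p ∈ (u * ·) '' M, ∀ q ∈ (u * ·) '' M, p * q ∈ (u * ·) '' M) ∧
         (∀ p ∈ (u * ·) '' M, u * p = p ∧ p * u = p) ∧
         (∀ p ∈ (u * ·) '' M, ∃ q ∈ (u * ·) '' M, q * p = u ∧ p * q = u)) := by
  -- The collection of nonempty closed left ideals of `S`.
  let C : Set (Set S) :=
    { I | IsClosed I ∧ I.Nonempty ∧ ∀ s : S, ∀ m ∈ I, s * m ∈ I }
  -- Zorn's lemma: there is a minimal element of `C`.
  have hzorn : ∃ M, Minimal (· ∈ C) M := by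
    refine zorn_superset _ fun c hcs hchain => ?_
    refine ⟨⋂₀ c, ⟨isClosed_sInter fun t ht => (hcs ht).1, ?_, fun s m hm => ?_⟩,
      fun t ht => Set.sInter_subset_of_mem ht⟩
    · obtain rfl | hcnemp := c.eq_empty_or_nonempty
      · rw [Set.sInter_empty]; exact Set.univ_nonempty
      convert @IsCompact.nonempty_iInter_of_directed_nonempty_isCompact_isClosed _ _ _
          hcnemp.coe_sort ((↑) : c → Set S) ?_ ?_ ?_ ?_
      · exact Set.sInter_eq_iInter
      · exact DirectedOn.directed_val (IsChain.directedOn hchain.symm)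
      exacts [fun i => (hcs i.prop).2.1, fun i => (hcs i.prop).1.isCompact,
        fun i => (hcs i.prop).1]
    · rw [Set.mem_sInter]
      exact fun t ht => (hcs ht).2.2 s m (Set.mem_sInter.mp hm t ht)
  obtain ⟨M, hM⟩ := hzorn
  obtain ⟨Mcl, Mne, Mid⟩ := hM.prop
  -- Key fact: for every `m ∈ M`, the set `S * m` equals `M`.
  have key : ∀ m ∈ M, Set.range (· * m) = M := by
    intro m hm
    have hsub : Set.range (· * m) ⊆ M := by
      rintro _ ⟨t, rfl⟩; exact Mid t m hm
    have hmem : Set.range (· * m) ∈ C := by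
      refine ⟨?_, ⟨m * m, m, rfl⟩, ?_⟩
      · have := hcl m Set.univ isClosed_univ
        rwa [Set.image_univ] at this
      · rintro s _ ⟨t, rfl⟩
        exact ⟨s * t, show s * t * m = s * (t * m) from mul_assoc s t m⟩
    exact hM.eq_of_subset hmem hsub
  refine ⟨M, Mne, Mid, ?_, ?_⟩
  · -- minimality among all (not nec. closed) left ideals
    intro M' hne hsub hid
    obtain ⟨m, hm⟩ := hne
    have h1 : Set.range (· * m) ⊆ M' := by
      rintro _ ⟨t, rfl⟩; exact hid t m hm
    rw [key m (hsub hm)] at h1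
    exact le_antisymm hsub h1
  · -- group structure on `uM`
    intro u hu hidem
    have huM : ∀ m ∈ M, u * m ∈ M := fun m hm => Mid u m hm
    -- right identity: every element of `M` satisfies `m * u = m`
    have rid : ∀ m ∈ M, m * u = m := by
      intro m hm
      have : m ∈ Set.range (· * u) := by rw [key u hu]; exact hm
      obtain ⟨t, rfl⟩ := this
      rw [mul_assoc, hidem]
    have GsubM : ∀ p ∈ (u * ·) '' M, p ∈ M := by
      rintro _ ⟨a, ha, rfl⟩; exact huM a ha
    have lid : ∀ p ∈ (u * ·) '' M, u * p = p := by
      rintro _ ⟨a, ha, rfl⟩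
      rw [← mul_assoc, hidem]
    have hmulmem : ∀ p ∈ (u * ·) '' M, ∀ q ∈ (u * ·) '' M, p * q ∈ (u * ·) '' M := by
      rintro _ ⟨a, ha, rfl⟩ _ ⟨b, hb, rfl⟩
      refine ⟨a * (u * b), Mid a _ (huM b hb), ?_⟩
      simp only [mul_assoc]
    have hlinv : ∀ p ∈ (u * ·) '' M, ∃ q ∈ (u * ·) '' M, q * p = u := by
      intro p hp
      have hpM : p ∈ M := GsubM p hp
      have : u ∈ Set.range (· * p) := by rw [key p hpM]; exact hu
      obtain ⟨s, hs'⟩ := this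
      have hs : s * p = u := hs'
      refine ⟨u * (s * u), ⟨s * u, Mid s u hu, rfl⟩, ?_⟩
      have : u * (s * u) * p = u * (s * (u * p)) := by simp only [mul_assoc]
      rw [this, lid p hp, hs, hidem]
    refine ⟨hmulmem, fun p hp => ⟨lid p hp, rid p (GsubM p hp)⟩, ?_⟩
    intro p hp
    obtain ⟨q, hq, hqp⟩ := hlinv p hp
    obtain ⟨r, hr, hrq⟩ := hlinv q hq
    have hrp : r = p := by
      have := rid r (GsubM r hr)
      calc r = r * u := (rid r (GsubM r hr)).symm
        _ = r * (q * p) := by rw [hqp]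
        _ = (r * q) * p := (mul_assoc r q p).symm
        _ = u * p := by rw [hrq]
        _ = p := lid p hp
    exact ⟨q, hq, hqp, by rw [← hrp]; exact hrq⟩
end

section
/- Let M ≺ N be structures with N |M|⁺-saturated, and let p be a complete type over N finitely satisfiable in M. Then for any set of parameters B ⊇ N, p has a unique extension to a complete type over B finitely satisfiable in M. -/
/-!
A type over `B` that is finitely satisfiable in `M` is determined by the traces
`{m ∈ M | φ(m)}` of its formulas: two formulas with the same trace on `M` cannot be separated
by such a type. Using `|M|⁺`-saturation of `N` one coordinate at a time, every finite tuple `b`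
has the same type over `M` as a tuple `n` from `N`, and then `φ(x, b)` and `φ(x, n)` have the
same trace on `M`. So an extension of `p` must contain `φ(x, b)` exactly when `φ(x, n) ∈ p`,
and conversely this recipe defines a complete extension, finitely satisfiable in `M` because
`p` is.
-/

open FirstOrder FirstOrder.Language Cardinal

namespace Coheir

variable {L : Language} {C : Type*} [L.Structure C]

def Holds {A : Set C} (φ : L.Formula (A ⊕ Fin 1)) (c : C) : Prop :=
  φ.Realize (Sum.elim Subtype.val fun _ => c)

def IsComplete {α : Type*} (q : Set (L.Formula α)) : Prop :=
  ∀ φ, φ ∈ q ∨ φ.not ∈ q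

def IsFinSatIn {A : Set C} (M : Set C) (q : Set (L.Formula (A ⊕ Fin 1))) : Prop :=
  ∀ s : Finset (L.Formula (A ⊕ Fin 1)), ↑s ⊆ q → ∃ m ∈ M, ∀ φ ∈ s, Holds φ m

variable (L) in
/-- `N` is `|M|⁺`-saturated, for types in one variable over parameter sets inside `N`. -/
def IsCardSuccSaturated (M N : Set C) : Prop :=
  ∀ A : Set C, A ⊆ N → #A ≤ #M → ∀ q : Set (L.Formula (A ⊕ Fin 1)),
    (∀ s : Finset (L.Formula (A ⊕ Fin 1)), ↑s ⊆ q → ∃ c : C, ∀ φ ∈ s, Holds φ c) →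
      ∃ n ∈ N, ∀ φ ∈ q, Holds φ n

variable (L) in
def IsTarskiVaught (M : Set C) : Prop :=
  ∀ φ : L.Formula (M ⊕ Fin 1), (∃ c, Holds φ c) → ∃ m ∈ M, Holds φ m

variable (L) in
def SameTypeOver (M : Set C) {ι : Type*} (b n : ι → C) : Prop :=
  ∀ θ : L.Formula (M ⊕ ι),
    θ.Realize (Sum.elim Subtype.val b) ↔ θ.Realize (Sum.elim Subtype.val n)

@[simp]
lemma holds_not {A : Set C} (φ : L.Formula (A ⊕ Fin 1)) (c : C) :
    Holds φ.not c ↔ ¬Holds φ c :=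
  Formula.realize_not

@[simp]
lemma holds_relabel_inclusion {A B : Set C} (h : A ⊆ B) (φ : L.Formula (A ⊕ Fin 1)) (c : C) :
    Holds (φ.relabel (Sum.map (Set.inclusion h) id)) c ↔ Holds φ c := by
  unfold Holds
  rw [Formula.realize_relabel, Sum.elim_comp_map]
  rfl

lemma IsFinSatIn.exists_holds_and {A M : Set C} {q : Set (L.Formula (A ⊕ Fin 1))}
    (hq : IsFinSatIn M q) {φ ψ : L.Formula (A ⊕ Fin 1)} (hφ : φ ∈ q) (hψ : ψ ∈ q) :
    ∃ m ∈ M, Holds φ m ∧ Holds ψ m := by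
  classical
  obtain ⟨m, hm, h⟩ := hq {φ, ψ} (by simp [Set.insert_subset_iff, hφ, hψ])
  exact ⟨m, hm, h φ (by simp), h ψ (by simp)⟩

lemma sameTypeOver_of_forall_imp {M : Set C} {ι : Type*} {b n : ι → C}
    (h : ∀ θ : L.Formula (M ⊕ ι),
      θ.Realize (Sum.elim Subtype.val b) → θ.Realize (Sum.elim Subtype.val n)) :
    SameTypeOver L M b n := fun θ =>
  ⟨h θ, fun hn => by_contra fun hb =>
    Formula.realize_not.1 (h θ.not (Formula.realize_not.2 hb)) hn⟩

lemma exists_formula_realize_iff_exists_snoc {α : Type*} {k : ℕ}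
    (θ : L.Formula (α ⊕ Fin (k + 1))) :
    ∃ χ : L.Formula (α ⊕ Fin k), ∀ (v : α → C) (w : Fin k → C),
      χ.Realize (Sum.elim v w) ↔ ∃ c, θ.Realize (Sum.elim v (Fin.snoc w c)) := by
  let g : α ⊕ Fin (k + 1) → (α ⊕ Fin k) ⊕ Fin 1 :=
    Sum.elim (Sum.inl ∘ Sum.inl) (Fin.lastCases (Sum.inr 0) (Sum.inl ∘ Sum.inr))
  refine ⟨(θ.relabel g).iExs (Fin 1), fun v w => ?_⟩
  have hg : ∀ x : Fin 1 → C,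
      Sum.elim (Sum.elim v w) x ∘ g = Sum.elim v (Fin.snoc w (x 0)) := by
    intro x
    funext y
    rcases y with a | i
    · rfl
    · induction i using Fin.lastCases <;> simp [g]
  simp only [Formula.realize_iExs, Formula.realize_relabel, hg]
  exact ⟨fun ⟨x, hx⟩ => ⟨x 0, hx⟩, fun ⟨c, hc⟩ => ⟨fun _ => c, hc⟩⟩

lemma exists_mem_sameTypeOver_snoc {M N : Set C} (hMN : M ⊆ N)
    (hsat : IsCardSuccSaturated L M N)
    {k : ℕ} {b : Fin (k + 1) → C} {n : Fin k → C} (hnN : ∀ i, n i ∈ N)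
    (hcard : #(M ∪ Set.range n : Set C) ≤ #M) (hn : SameTypeOver L M (Fin.init b) n) :
    ∃ c ∈ N, SameTypeOver L M b (Fin.snoc n c) := by
  classical
  set A : Set C := M ∪ Set.range n
  let H : M ⊕ Fin (k + 1) → A ⊕ Fin 1 :=
    Sum.elim (fun m => Sum.inl ⟨m, Or.inl m.2⟩)
      (Fin.lastCases (Sum.inr 0) fun j => Sum.inl ⟨n j, Or.inr ⟨j, rfl⟩⟩)
  have hH : ∀ (θ : L.Formula (M ⊕ Fin (k + 1))) (c : C),
      Holds (θ.relabel H) c ↔ θ.Realize (Sum.elim Subtype.val (Fin.snoc n c)) := by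
    intro θ c
    unfold Holds
    rw [Formula.realize_relabel]
    congr! 1
    funext x
    rcases x with m | i
    · rfl
    · induction i using Fin.lastCases <;> simp [H]
  -- The type of `b (last k)` over `M` and `Fin.init b`, with `Fin.init b` replaced by `n`;
  -- it is finitely satisfiable because `n` and `Fin.init b` have the same type over `M`.
  let q : Set (L.Formula (A ⊕ Fin 1)) :=
    Formula.relabel H '' {θ : L.Formula (M ⊕ Fin (k + 1)) | θ.Realize (Sum.elim Subtype.val b)}
  have hq : ∀ s : Finset (L.Formula (A ⊕ Fin 1)), ↑s ⊆ q → ∃ c : C, ∀ φ ∈ s, Holds φ c := by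
    intro s hs
    obtain ⟨s', hs'b, rfl⟩ := Finset.subset_set_image_iff.1 hs
    obtain ⟨χ, hχ⟩ :=
      exists_formula_realize_iff_exists_snoc (C := C) (Formula.iInf fun θ : s' => θ.1)
    have hχb : χ.Realize (Sum.elim Subtype.val (Fin.init b)) :=
      (hχ _ _).2 ⟨b (Fin.last k), by simpa [Fin.snoc_init_self] using fun θ hθ => hs'b hθ⟩
    obtain ⟨c, hc⟩ := (hχ _ _).1 ((hn χ).1 hχb)
    exact ⟨c, by simpa [hH] using hc⟩
  obtain ⟨c, hcN, hc⟩ :=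
    hsat A (Set.union_subset hMN (Set.range_subset_iff.2 hnN)) hcard q hq
  exact ⟨c, hcN, sameTypeOver_of_forall_imp fun θ hθ => (hH θ c).1 (hc _ ⟨θ, hθ, rfl⟩)⟩

lemma exists_mem_sameTypeOver_of_infinite {M N : Set C} (hMN : M ⊆ N) (hM : M.Infinite)
    (hsat : IsCardSuccSaturated L M N) :
    ∀ {k : ℕ} (b : Fin k → C), ∃ n : Fin k → C, (∀ i, n i ∈ N) ∧ SameTypeOver L M b n
  | 0, b => ⟨b, finZeroElim, fun _ => Iff.rfl⟩
  | k + 1, b => by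
    obtain ⟨n, hnN, hn⟩ := exists_mem_sameTypeOver_of_infinite hMN hM hsat (Fin.init b)
    have hcard : #(M ∪ Set.range n : Set C) ≤ #M :=
      have : Infinite M := hM.to_subtype
      (mk_union_le _ _).trans <| add_le_of_le (aleph0_le_mk M) le_rfl <|
        (Set.finite_range n).lt_aleph0.le.trans (aleph0_le_mk M)
    obtain ⟨c, hcN, hc⟩ := exists_mem_sameTypeOver_snoc hMN hsat hnN hcard hn
    exact ⟨Fin.snoc n c, Fin.lastCases (by simpa) (by simpa), hc⟩

lemma eq_univ_of_finite {M : Set C} (hM : M.Finite) (hMelem : IsTarskiVaught L M) :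
    M = Set.univ := by
  have : Finite M := hM.to_subtype
  refine Set.eq_univ_of_forall fun c => by_contra fun hc => ?_
  let φ : L.Formula (M ⊕ Fin 1) :=
    Formula.iInf fun m : M => ((Term.var (Sum.inr 0)).equal (Term.var (Sum.inl m))).not
  have hφ : ∀ x, Holds φ x ↔ ∀ m ∈ M, x ≠ m := by
    simp [φ, Holds]
  obtain ⟨m, hm, hφm⟩ := hMelem φ ⟨c, (hφ c).2 fun m hm hcm => hc (hcm ▸ hm)⟩
  exact (hφ m).1 hφm m hm rfl

lemma exists_mem_sameTypeOver {M N : Set C} (hMN : M ⊆ N)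
    (hMelem : IsTarskiVaught L M) (hsat : IsCardSuccSaturated L M N) {k : ℕ} (b : Fin k → C) :
    ∃ n : Fin k → C, (∀ i, n i ∈ N) ∧ SameTypeOver L M b n := by
  -- For finite `M` the cardinality bound needed for saturation fails, but then `M` is all of `C`.
  rcases M.finite_or_infinite with hM | hM
  · refine ⟨b, fun i => hMN ?_, fun _ => Iff.rfl⟩
    rw [eq_univ_of_finite hM hMelem]
    trivial
  · exact exists_mem_sameTypeOver_of_infinite hMN hM hsat b

lemma exists_fin_params {α β : Type*} (φ : L.Formula (α ⊕ β)) :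
    ∃ (k : ℕ) (a : Fin k → α) (θ : L.Formula (Fin k ⊕ β)), ∀ (v : α → C) (w : β → C),
      φ.Realize (Sum.elim v w) ↔ θ.Realize (Sum.elim (v ∘ a) w) := by
  classical
  let t : Finset α := φ.freeVarFinset.toLeft
  let e := t.equivFin
  let f : φ.freeVarFinset → Fin t.card ⊕ β
    | ⟨Sum.inl a, ha⟩ => Sum.inl (e ⟨a, Finset.mem_toLeft.2 ha⟩)
    | ⟨Sum.inr b, _⟩ => Sum.inr b
  refine ⟨t.card, fun i => e.symm i, φ.restrictFreeVar f, fun v w => ?_⟩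
  refine (BoundedFormula.realize_restrictFreeVar _ ?_).symm
  rintro ⟨a | b, h⟩ <;> simp [f]

lemma exists_holds_iff_holds_on {M N B : Set C} (hMN : M ⊆ N)
    (hMelem : IsTarskiVaught L M) (hsat : IsCardSuccSaturated L M N) (φ : L.Formula (B ⊕ Fin 1)) :
    ∃ ψ : L.Formula (N ⊕ Fin 1), ∀ m ∈ M, Holds ψ m ↔ Holds φ m := by
  obtain ⟨k, a, θ, hθ⟩ := exists_fin_params (C := C) φ
  obtain ⟨n, hnN, hn⟩ := exists_mem_sameTypeOver hMN hMelem hsat (Subtype.val ∘ a)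
  refine ⟨θ.relabel (Sum.map (fun i => ⟨n i, hnN i⟩) id), fun m hm => ?_⟩
  have := hn (θ.relabel (Sum.elim Sum.inr fun _ => Sum.inl ⟨m, hm⟩))
  simp only [Formula.realize_relabel, Sum.comp_elim, Sum.elim_comp_inr] at this
  simp only [Holds, hθ, Formula.realize_relabel, Sum.elim_comp_map]
  exact this.symm

def coheir (M : Set C) {N : Set C} (p : Set (L.Formula (N ⊕ Fin 1))) (B : Set C) :
    Set (L.Formula (B ⊕ Fin 1)) :=
  {φ | ∃ ψ ∈ p, ∀ m ∈ M, Holds ψ m ↔ Holds φ m}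

section coheir

variable {M N B : Set C} {p : Set (L.Formula (N ⊕ Fin 1))}

lemma relabel_mem_coheir (hNB : N ⊆ B) {φ : L.Formula (N ⊕ Fin 1)} (hφ : φ ∈ p) :
    φ.relabel (Sum.map (Set.inclusion hNB) id) ∈ coheir M p B :=
  ⟨φ, hφ, fun m _ => (holds_relabel_inclusion hNB φ m).symm⟩

lemma isComplete_coheir (hp : IsComplete p)
    (htrace : ∀ φ : L.Formula (B ⊕ Fin 1), ∃ ψ : L.Formula (N ⊕ Fin 1),
      ∀ m ∈ M, Holds ψ m ↔ Holds φ m) :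
    IsComplete (coheir M p B) := by
  intro φ
  obtain ⟨ψ, hψ⟩ := htrace φ
  rcases hp ψ with h | h
  · exact Or.inl ⟨ψ, h, hψ⟩
  · exact Or.inr ⟨ψ.not, h, fun m hm => by simp [hψ m hm]⟩

lemma isFinSatIn_coheir (hp : IsFinSatIn M p) : IsFinSatIn M (coheir M p B) := by
  classical
  intro s hs
  choose ψ hψp hψ using fun φ : s => hs φ.2
  obtain ⟨m, hm, h⟩ := hp (Finset.univ.image ψ) (by simpa [Set.range_subset_iff] using hψp)
  exact ⟨m, hm, fun φ hφ => (hψ ⟨φ, hφ⟩ m hm).1 (h _ (by simp))⟩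

lemma eq_coheir (hNB : N ⊆ B) (hp : IsComplete p)
    (htrace : ∀ φ : L.Formula (B ⊕ Fin 1), ∃ ψ : L.Formula (N ⊕ Fin 1),
      ∀ m ∈ M, Holds ψ m ↔ Holds φ m)
    {q : Set (L.Formula (B ⊕ Fin 1))} (hqc : IsComplete q) (hqfs : IsFinSatIn M q)
    (hpq : ∀ φ ∈ p, φ.relabel (Sum.map (Set.inclusion hNB) id) ∈ q) :
    q = coheir M p B := by
  ext φ
  constructor
  · intro hφ
    obtain ⟨ψ, hψ⟩ := htrace φ
    refine ⟨ψ, (hp ψ).resolve_right fun hψn => ?_, hψ⟩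
    obtain ⟨m, hm, hnψ, hφm⟩ := hqfs.exists_holds_and (hpq _ hψn) hφ
    simp only [holds_relabel_inclusion, holds_not] at hnψ
    exact hnψ ((hψ m hm).2 hφm)
  · rintro ⟨ψ, hψp, hψ⟩
    refine (hqc φ).resolve_right fun hφn => ?_
    obtain ⟨m, hm, hψm, hnφ⟩ := hqfs.exists_holds_and (hpq _ hψp) hφn
    simp only [holds_relabel_inclusion, holds_not] at hψm hnφ
    exact hnφ ((hψ m hm).1 hψm)

end coheir

end Coheir

open Coheir in
theorem stmt8_general {L : Language} {C : Type*} [L.Structure C]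
    (M N B : Set C) (hMN : M ⊆ N) (hNB : N ⊆ B)
    -- M is an elementary subset of C (Tarski–Vaught)
    (hMelem : ∀ φ : L.Formula (↥M ⊕ Fin 1),
      (∃ c : C, φ.Realize (Sum.elim Subtype.val fun _ => c)) →
        ∃ m ∈ M, φ.Realize (Sum.elim Subtype.val fun _ => m))
    -- N is |M|⁺-saturated: every finitely satisfiable type over a parameter set
    -- of cardinality at most |M| contained in N is realized in N
    (hsat : ∀ A : Set C, A ⊆ N → Cardinal.mk A ≤ Cardinal.mk M →
      ∀ q : Set (L.Formula (↥A ⊕ Fin 1)),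
        (∀ s : Finset (L.Formula (↥A ⊕ Fin 1)), ↑s ⊆ q →
          ∃ c : C, ∀ φ ∈ s, φ.Realize (Sum.elim Subtype.val fun _ => c)) →
        ∃ n ∈ N, ∀ φ ∈ q, φ.Realize (Sum.elim Subtype.val fun _ => n))
    -- p is a complete type over N, finitely satisfiable in M
    (p : Set (L.Formula (↥N ⊕ Fin 1)))
    (hpc : ∀ φ : L.Formula (↥N ⊕ Fin 1), φ ∈ p ∨ φ.not ∈ p)
    (hpfs : ∀ s : Finset (L.Formula (↥N ⊕ Fin 1)), ↑s ⊆ p →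
      ∃ m ∈ M, ∀ φ ∈ s, φ.Realize (Sum.elim Subtype.val fun _ => m)) :
    ∃! q : Set (L.Formula (↥B ⊕ Fin 1)),
      (∀ φ : L.Formula (↥B ⊕ Fin 1), φ ∈ q ∨ φ.not ∈ q) ∧
      (∀ s : Finset (L.Formula (↥B ⊕ Fin 1)), ↑s ⊆ q →
        ∃ m ∈ M, ∀ φ ∈ s, φ.Realize (Sum.elim Subtype.val fun _ => m)) ∧
      (∀ φ ∈ p, φ.relabel (Sum.map (Set.inclusion hNB) id) ∈ q) := by
  have htrace (φ : L.Formula (B ⊕ Fin 1)) := exists_holds_iff_holds_on hMN hMelem hsat φ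
  refine ⟨coheir M p B, ⟨isComplete_coheir hpc htrace, isFinSatIn_coheir hpfs,
    fun φ hφ => relabel_mem_coheir hNB hφ⟩, ?_⟩
  rintro q ⟨hqc, hqfs, hqp⟩
  exact eq_coheir hNB hpc htrace hqc hqfs hqp

/-- If `M ≺ N` (both elementary in the ambient structure `C`), `N` is `|M|⁺`-saturated,
and `p` is a complete type over `N` finitely satisfiable in `M`, then for any parameter
set `B ⊇ N` there is a unique extension of `p` to a complete type over `B` finitely
satisfiable in `M`. -/
theorem stmt8 {L : Language} {C : Type*} [L.Structure C]
    (M N B : Set C) (hMN : M ⊆ N) (hNB : N ⊆ B)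
    -- M is an elementary subset of C (Tarski–Vaught)
    (hMelem : ∀ φ : L.Formula (↥M ⊕ Fin 1),
      (∃ c : C, φ.Realize (Sum.elim Subtype.val fun _ => c)) →
        ∃ m ∈ M, φ.Realize (Sum.elim Subtype.val fun _ => m))
    -- N is an elementary subset of C
    (hNelem : ∀ φ : L.Formula (↥N ⊕ Fin 1),
      (∃ c : C, φ.Realize (Sum.elim Subtype.val fun _ => c)) →
        ∃ n ∈ N, φ.Realize (Sum.elim Subtype.val fun _ => n))
    -- N is |M|⁺-saturated: every finitely satisfiable type over a parameter set
    -- of cardinality at most |M| contained in N is realized in N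
    (hsat : ∀ A : Set C, A ⊆ N → Cardinal.mk A ≤ Cardinal.mk M →
      ∀ q : Set (L.Formula (↥A ⊕ Fin 1)),
        (∀ s : Finset (L.Formula (↥A ⊕ Fin 1)), ↑s ⊆ q →
          ∃ c : C, ∀ φ ∈ s, φ.Realize (Sum.elim Subtype.val fun _ => c)) →
        ∃ n ∈ N, ∀ φ ∈ q, φ.Realize (Sum.elim Subtype.val fun _ => n))
    -- p is a complete type over N, finitely satisfiable in M
    (p : Set (L.Formula (↥N ⊕ Fin 1)))
    (hpc : ∀ φ : L.Formula (↥N ⊕ Fin 1), φ ∈ p ∨ φ.not ∈ p)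
    (hpfs : ∀ s : Finset (L.Formula (↥N ⊕ Fin 1)), ↑s ⊆ p →
      ∃ m ∈ M, ∀ φ ∈ s, φ.Realize (Sum.elim Subtype.val fun _ => m)) :
    ∃! q : Set (L.Formula (↥B ⊕ Fin 1)),
      (∀ φ : L.Formula (↥B ⊕ Fin 1), φ ∈ q ∨ φ.not ∈ q) ∧
      (∀ s : Finset (L.Formula (↥B ⊕ Fin 1)), ↑s ⊆ q →
        ∃ m ∈ M, ∀ φ ∈ s, φ.Realize (Sum.elim Subtype.val fun _ => m)) ∧
      (∀ φ ∈ p, φ.relabel (Sum.map (Set.inclusion hNB) id) ∈ q) :=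
  stmt8_general M N B hMN hNB hMelem hsat p hpc hpfs
end

section
/- Let f : G → H : S and g : H → L : T be quasi-homomorphisms between groups with normal symmetric error sets S ⊆ H and T ⊆ L, and suppose g[S] ⊆ Tⁿ. Then g∘f : G → L is a quasi-homomorphism with error set T^(4+n), i.e., (g∘f)(y)⁻¹(g∘f)(x)⁻¹(g∘f)(xy) ∈ T^(4+n) for all x,y ∈ G. -/
open Pointwise

theorem stmt13 {G H L : Type*} [Group G] [Group H] [Group L]
    (S : Set H) (T : Set L) (hSs : S⁻¹ = S) (hTs : T⁻¹ = T)
    (hSn : ∀ s ∈ S, ∀ h : H, h * s * h⁻¹ ∈ S)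
    (hTn : ∀ t ∈ T, ∀ l : L, l * t * l⁻¹ ∈ T)
    (f : G → H) (g : H → L)
    (hf : ∀ x y : G, (f y)⁻¹ * (f x)⁻¹ * f (x * y) ∈ S)
    (hg : ∀ x y : H, (g y)⁻¹ * (g x)⁻¹ * g (x * y) ∈ T)
    (n : ℕ) (hgS : g '' S ⊆ T ^ n) :
    ∀ x y : G, (g (f y))⁻¹ * (g (f x))⁻¹ * g (f (x * y)) ∈ T ^ (4 + n) := by
  intro x y
  have hs : (f y)⁻¹ * (f x)⁻¹ * f (x * y) ∈ S := hf x y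
  set s := (f y)⁻¹ * (f x)⁻¹ * f (x * y) with hsdef
  have hfs : f x * (f y * s) = f (x * y) := by rw [hsdef]; group
  have hgs : g s ∈ T ^ n := hgS ⟨s, hs, rfl⟩
  obtain ⟨t0, ht0⟩ : ∃ t, t ∈ T := ⟨_, hg 1 1⟩
  have ht0' : t0⁻¹ ∈ T := by rw [← hTs]; exact Set.inv_mem_inv.mpr ht0
  have key : (g (f y))⁻¹ * (g (f x))⁻¹ * g (f (x * y)) =
      g s * ((g s)⁻¹ * (g (f y))⁻¹ * g (f y * s)) *
      ((g (f y * s))⁻¹ * (g (f x))⁻¹ * g (f x * (f y * s))) * t0 * t0⁻¹ := by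
    rw [hfs]; group
  rw [key]
  have h4 : 4 + n = n + 1 + 1 + 1 + 1 := by ring
  rw [h4, pow_succ, pow_succ, pow_succ, pow_succ]
  exact Set.mul_mem_mul (Set.mul_mem_mul (Set.mul_mem_mul
    (Set.mul_mem_mul hgs (hg (f y) s)) (hg (f x) (f y * s))) ht0) ht0'
end

section
/- Let H be a locally compact Hausdorff group, S ⊆ H compact, normal (conjugation-invariant), and symmetric, and let f : G → H be a quasi-homomorphism with error set S from a group G generated by a symmetric set X with e ∈ X. Suppose for every compact V ⊆ H there is i with f⁻¹[V] ⊆ X^i, and cl(f[X]) is compact. Then for every relatively compact neighborhood U of the identity, the set Y := f⁻¹[U·S] satisfies: Y is covered by finitely many left translates of X and X is covered by finitely many left translates of Y (i.e., X and Y are commensurable). -/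
/-!
Since `closure U · S` is compact, `Y = f⁻¹(U S)` lies in some power `X^i`, which is covered by
finitely many translates of `X`. Conversely, compactness of `closure (f X)` covers `f X` by
finitely many translates `f(a) U` with `a ∈ X`; if `f x ∈ f(a) U`, the quasi-homomorphism
property puts `f(a⁻¹ x)` in `U S`, so `x ∈ a Y`.
-/

open Pointwise Set Topology

theorem exists_finite_subset_subset_mul_of_isCompact_closure_s17 {G : Type*}
    [TopologicalSpace G] [Group G] [IsTopologicalGroup G] {K U : Set G}
    (hK : IsCompact (closure K)) (hU : U ∈ 𝓝 1) :
    ∃ T : Finset G, ↑T ⊆ K ∧ K ⊆ ↑T * U := by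
  set W := interior U ∩ (interior U)⁻¹
  have hWo : IsOpen W := isOpen_interior.inter isOpen_interior.inv
  have hU1 : (1 : G) ∈ interior U := mem_interior_iff_mem_nhds.2 hU
  have hW1 : W ∈ 𝓝 1 := hWo.mem_nhds ⟨hU1, by simpa using hU1⟩
  have hWU : W ⊆ U := inter_subset_left.trans interior_subset
  have hKW : closure K ⊆ ⋃ k ∈ K, (k * ·) '' W := by
    rw [iUnion_mul_left_image]
    exact closure_subset_mul_right_of_mem_nhds_one_of_inv K hW1
      fun x hx => ⟨hx.2, by simpa using hx.1⟩
  obtain ⟨T, hTK, hTfin, hKT⟩ :=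
    hK.elim_finite_subcover_image (fun k _ => isOpenMap_mul_left k W hWo) hKW
  refine ⟨hTfin.toFinset, by simpa using hTK, fun k hk => ?_⟩
  rw [hTfin.coe_toFinset, ← iUnion_mul_left_image]
  exact biUnion_mono subset_rfl (fun _ _ => image_mono hWU) (hKT (subset_closure hk))

section QuasiHom

variable {G H : Type*} [Group G] [Group H] {S : Set H} {f : G → H}

theorem exists_mem_apply_inv_mul_eq (hSs : S⁻¹ = S)
    (hfr : ∀ x y : G, (f y)⁻¹ * (f x)⁻¹ * f (x * y) ∈ S) (a b : G) :
    ∃ s ∈ S, f (a⁻¹ * b) = (f a)⁻¹ * f b * s := by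
  have hs := hfr a (a⁻¹ * b)
  rw [mul_inv_cancel_left, ← hSs] at hs
  exact ⟨_, hs, by group⟩

theorem subset_mul_preimage_mul_of_image_subset (hSs : S⁻¹ = S)
    (hfr : ∀ x y : G, (f y)⁻¹ * (f x)⁻¹ * f (x * y) ∈ S) {A F : Set G} {U : Set H}
    (hA : f '' A ⊆ f '' F * U) : A ⊆ F * f ⁻¹' (U * S) := by
  intro x hx
  obtain ⟨_, ⟨a, haF, rfl⟩, u, hu, hxau⟩ := hA (mem_image_of_mem f hx)
  obtain ⟨s, hs, hfax⟩ := exists_mem_apply_inv_mul_eq hSs hfr a x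
  refine ⟨a, haF, a⁻¹ * x, ⟨u, hu, s, hs, ?_⟩, mul_inv_cancel_left a x⟩
  rw [hfax, ← hxau, inv_mul_cancel_left]

end QuasiHom

theorem stmt17_general {G H : Type*} [Group G] [Group H] [TopologicalSpace H] [IsTopologicalGroup H]
    (X : Set G)
    (hap : ∀ n : ℕ, ∃ F : Finset G, X ^ n ⊆ ↑F * X)
    (S : Set H) (hSc : IsCompact S) (hSs : S⁻¹ = S)
    (f : G → H)
    (hfr : ∀ x y : G, (f y)⁻¹ * (f x)⁻¹ * f (x * y) ∈ S)
    (hpre : ∀ V : Set H, IsCompact V → ∃ i : ℕ, f ⁻¹' V ⊆ X ^ i)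
    (hfX : IsCompact (closure (f '' X))) :
    ∀ U : Set H, U ∈ nhds (1 : H) → IsCompact (closure U) →
      (∃ F : Finset G, f ⁻¹' (U * S) ⊆ ↑F * X) ∧
      (∃ F : Finset G, X ⊆ ↑F * (f ⁻¹' (U * S))) := by
  classical
  intro U hU hUc
  constructor
  · obtain ⟨i, hi⟩ := hpre _ (hUc.mul hSc)
    obtain ⟨F, hF⟩ := hap i
    exact ⟨F, fun x hx => hF (hi (preimage_mono (mul_subset_mul_right subset_closure) hx))⟩
  · obtain ⟨T, hTX, hXT⟩ := exists_finite_subset_subset_mul_of_isCompact_closure_s17 hfX hU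
    obtain ⟨F, -, rfl⟩ := Finset.subset_set_image_iff.1 hTX
    exact ⟨F, subset_mul_preimage_mul_of_image_subset hSs hfr (by simpa using hXT)⟩

theorem stmt17 {G H : Type*} [Group G] [Group H] [TopologicalSpace H] [IsTopologicalGroup H]
    [LocallyCompactSpace H] [T2Space H]
    (X : Set G) (hX1 : (1 : G) ∈ X) (hXs : X⁻¹ = X)
    (hgen : Subgroup.closure X = ⊤)
    (hap : ∀ n : ℕ, ∃ F : Finset G, X ^ n ⊆ ↑F * X)
    (S : Set H) (hSc : IsCompact S) (hSs : S⁻¹ = S)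
    (hSn : ∀ s ∈ S, ∀ h : H, h * s * h⁻¹ ∈ S)
    (f : G → H)
    (hfr : ∀ x y : G, (f y)⁻¹ * (f x)⁻¹ * f (x * y) ∈ S)
    (hfl : ∀ x y : G, f (x * y) * (f y)⁻¹ * (f x)⁻¹ ∈ S)
    (hpre : ∀ V : Set H, IsCompact V → ∃ i : ℕ, f ⁻¹' V ⊆ X ^ i)
    (hfX : IsCompact (closure (f '' X))) :
    ∀ U : Set H, U ∈ nhds (1 : H) → IsCompact (closure U) →
      (∃ F : Finset G, f ⁻¹' (U * S) ⊆ ↑F * X) ∧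
      (∃ F : Finset G, X ⊆ ↑F * (f ⁻¹' (U * S))) :=
  stmt17_general X hap S hSc hSs f hfr hpre hfX
end
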